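/- Under the two-component mixture regression model, the ordinary least-squares estimator λ̂1⁽ⁿ⁾ = A(m)·(X̃ᵀX̃)⁻¹X̃ᵀY — computed from an i.i.d. sample (X_i, Y_i), i = 1, …, n, with design matrix X̃ having rows X̃_iᵀ = (1, X_iᵀ) — converges almost surely to λ1 = p·β as n → ∞, provided E[X̃₁X̃₁ᵀ] is invertible and X̃₁Y₁ is integrable componentwise. -/

import Mathlib

open MeasureTheory ProbabilityTheory Filter Matrix
open scoped Topology

set_option maxHeartbeats 1000000

lemma my_smul_inv {n : ℕ} (c : ℝ) (hc : c ≠ 0) (B : Matrix (Fin n) (Fin n) ℝ) :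
    (c • B)⁻¹ = c⁻¹ • B⁻¹ := by
  by_cases h : IsUnit B.det
  · apply Matrix.inv_eq_right_inv
    rw [Matrix.smul_mul, Matrix.mul_smul, smul_smul, mul_inv_cancel₀ hc, one_smul,
      Matrix.mul_nonsing_inv _ h]
  · have h2 : ¬ IsUnit (c • B).det := by
      rw [Matrix.det_smul]
      intro hu
      exact h (isUnit_of_mul_isUnit_right hu)
    rw [Matrix.nonsing_inv_apply_not_isUnit _ h, Matrix.nonsing_inv_apply_not_isUnit _ h2,
      smul_zero]

lemma my_int_mul {Ω : Type*} [MeasurableSpace Ω] {Pr : Measure Ω}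
    {f g : Ω → ℝ} (hf : MemLp f 2 Pr) (hg : MemLp g 2 Pr) :
    Integrable (fun ω => f ω * g ω) Pr := by
  have h1 := hf.integrable_sq
  have h2 := hg.integrable_sq
  refine ((h1.add h2).const_mul (2⁻¹ : ℝ)).mono' (hf.1.mul hg.1) ?_
  filter_upwards with ω
  simp only [Pi.add_apply, norm_mul, Real.norm_eq_abs]
  nlinarith [sq_nonneg (|f ω| - |g ω|), sq_abs (f ω), sq_abs (g ω), abs_nonneg (f ω),
    abs_nonneg (g ω)]

lemma my_meas_cons {m : ℕ} :
    Measurable (fun x : Fin m → ℝ => (Fin.cons 1 x : Fin (m+1) → ℝ)) := by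
  apply measurable_pi_iff.mpr
  intro j
  refine Fin.cases ?_ ?_ j
  · simpa using measurable_const
  · intro k
    simpa using measurable_pi_apply k

/-- Under the two-component mixture regression model, the OLS estimator
`λ̂1⁽ⁿ⁾ = A(m)·(X̃ᵀX̃)⁻¹X̃ᵀY` computed from an i.i.d. sample `(X_i, Y_i)`, `i = 1,…,n`
(with rows `X̃_iᵀ = (1, X_iᵀ)`), converges almost surely to `λ1 = p·β` as `n → ∞`,
provided `E[X̃₁X̃₁ᵀ]` is invertible and `X̃₁Y₁` is integrable componentwise.
(The matrix inverse is Mathlib's `Matrix.inv`, which is zero off the event of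
invertibility; for large `n` invertibility holds almost surely.) -/
theorem mixture_ols_strong_consistency
    {Ω : Type*} [MeasurableSpace Ω] (Pr : Measure Ω) [IsProbabilityMeasure Pr]
    {m : ℕ} (X : Ω → (Fin m → ℝ)) (Y1 Y2 P : Ω → ℝ)
    (hX : Measurable X) (hY1 : Measurable Y1) (hY2 : Measurable Y2) (hP : Measurable P)
    (p μ1 μ2 : ℝ) (β : Fin m → ℝ)
    (hp : p ∈ Set.Ioo (0 : ℝ) 1)
    (hPvals : ∀ ω, P ω = 0 ∨ P ω = 1)
    (hPp : Pr {ω | P ω = 1} = ENNReal.ofReal p)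
    (hindep : IndepFun P (fun ω => (X ω, Y1 ω, Y2 ω)) Pr)
    (hY2X : IndepFun Y2 X Pr)
    (hXL2 : MemLp X 2 Pr)
    (hY1int : Integrable Y1 Pr) (hY2int : Integrable Y2 Pr)
    (hcondY1 : Pr[Y1 | MeasurableSpace.comap X inferInstance]
        =ᵐ[Pr] fun ω => μ1 + β ⬝ᵥ X ω)
    (hmeanY2 : ∫ ω, Y2 ω ∂Pr = μ2)
    -- the observed response
    (Y : Ω → ℝ) (hY : Y = fun ω => P ω * Y1 ω + (1 - P ω) * Y2 ω)
    -- an i.i.d. sample of copies of (X, Y)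
    (Z : ℕ → Ω → (Fin m → ℝ) × ℝ)
    (hZmeas : ∀ i, Measurable (Z i))
    (hiid : iIndepFun Z Pr)
    (hident : ∀ i, IdentDistrib (Z i) (fun ω => (X ω, Y ω)) Pr Pr)
    -- extended design vectors, projection matrix, empirical Gram matrix, OLS estimator
    (Xt : ℕ → Ω → (Fin (m + 1) → ℝ)) (hXt : ∀ i ω, Xt i ω = Fin.cons 1 ((Z i ω).1))
    (A : Matrix (Fin m) (Fin (m + 1)) ℝ)
    (hA : A = Matrix.of fun i j => if j = i.succ then (1 : ℝ) else 0)
    (G : ℕ → Ω → Matrix (Fin (m + 1)) (Fin (m + 1)) ℝ)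
    (hG : ∀ n ω, G n ω = ∑ i ∈ Finset.range n, Matrix.of fun j k => Xt i ω j * Xt i ω k)
    (lamhat : ℕ → Ω → (Fin m → ℝ))
    (hlamhat : ∀ n ω,
      lamhat n ω = A.mulVec ((G n ω)⁻¹.mulVec (∑ i ∈ Finset.range n, fun j => Xt i ω j * (Z i ω).2)))
    -- moment conditions: E[X̃₁X̃₁ᵀ] invertible and X̃₁Y₁ integrable componentwise
    (hMinv : IsUnit ((Matrix.of fun j k =>
        ∫ ω, (Fin.cons 1 (X ω) : Fin (m + 1) → ℝ) j * (Fin.cons 1 (X ω) : Fin (m + 1) → ℝ) k ∂Pr :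
          Matrix (Fin (m + 1)) (Fin (m + 1)) ℝ)).det)
    (hXtY : ∀ j : Fin (m + 1), Integrable (fun ω => (Fin.cons 1 (X ω) : Fin (m + 1) → ℝ) j * Y ω) Pr) :
    ∀ᵐ ω ∂Pr, Tendsto (fun n => lamhat n ω) atTop (nhds (p • β)) := by
  obtain ⟨hp0, hp1⟩ := hp
  -- notation
  set Xe : Ω → Fin (m+1) → ℝ := fun ω => Fin.cons 1 (X ω) with hXe
  set M : Matrix (Fin (m+1)) (Fin (m+1)) ℝ :=
    Matrix.of (fun j k => ∫ ω, Xe ω j * Xe ω k ∂Pr) with hM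
  have hMinv' : IsUnit M.det := hMinv
  set b : Fin (m+1) → ℝ := fun j => ∫ ω, Xe ω j * Y ω ∂Pr with hb
  set lv : Fin (m+1) → ℝ := Fin.cons (p*μ1 + (1-p)*μ2) (p • β) with hlv
  have hXemeas : Measurable Xe := my_meas_cons.comp hX
  have hYmeas : Measurable Y := by
    rw [hY]; exact (hP.mul hY1).add ((measurable_const.sub hP).mul hY2)
  -- L2 components
  have hXk2 : ∀ k : Fin m, MemLp (fun ω => X ω k) 2 Pr := by
    intro k
    exact hXL2.of_le ((measurable_pi_apply k).comp hX).aestronglyMeasurable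
      (Filter.Eventually.of_forall fun ω => norm_le_pi_norm (X ω) k)
  have hXe2 : ∀ j, MemLp (fun ω => Xe ω j) 2 Pr := by
    intro j
    refine Fin.cases ?_ ?_ j
    · simpa [hXe] using memLp_const (μ := Pr) (1:ℝ)
    · intro k
      simpa [hXe] using hXk2 k
  have hXeint : ∀ j, Integrable (fun ω => Xe ω j) Pr :=
    fun j => (hXe2 j).integrable one_le_two
  have hprod_int : ∀ j k, Integrable (fun ω => Xe ω j * Xe ω k) Pr :=
    fun j k => my_int_mul (hXe2 j) (hXe2 k)
  -- the distribution of P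
  have hPset : MeasurableSet {ω | P ω = 1} := hP (measurableSet_singleton 1)
  have hPind : P = Set.indicator {ω | P ω = 1} (fun _ => (1:ℝ)) := by
    funext ω
    rcases hPvals ω with h | h <;> simp [Set.indicator, h]
  have hPint : Integrable P Pr := by
    rw [hPind]; exact (integrable_const (1:ℝ)).indicator hPset
  have hEP : ∫ ω, P ω ∂Pr = p := by
    calc ∫ ω, P ω ∂Pr
        = ∫ ω, Set.indicator {ω | P ω = 1} (fun _ => (1:ℝ)) ω ∂Pr := by rw [← hPind]
      _ = (Pr {ω | P ω = 1}).toReal • (1:ℝ) := integral_indicator_const (1:ℝ) hPset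
      _ = p := by rw [hPp, ENNReal.toReal_ofReal hp0.le, smul_eq_mul, mul_one]
  have hE1P : ∫ ω, (1 - P ω) ∂Pr = 1 - p := by
    rw [integral_sub (integrable_const 1) hPint, hEP]
    simp
  -- Part I : b = M.mulVec lv
  have hbj : b = M.mulVec lv := by
    funext j
    set f : Ω → ℝ := fun ω => Xe ω j with hf
    have hfmeas : Measurable f := (measurable_pi_apply j).comp hXemeas
    have hW1meas : Measurable (fun ω => f ω * Y1 ω) := hfmeas.mul hY1
    have hW2meas : Measurable (fun ω => f ω * Y2 ω) := hfmeas.mul hY2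
    have hintfy : Integrable (fun ω => f ω * Y ω) Pr := hXtY j
    have hbound : ∀ ω, ‖P ω * (f ω * Y1 ω)‖ ≤ ‖f ω * Y ω‖ := by
      intro ω
      rcases hPvals ω with h | h
      · simp only [h, zero_mul, norm_zero]
        positivity
      · have hYω : Y ω = Y1 ω := by rw [hY]; simp [h]
        simp [h, hYω]
    have hPW1int : Integrable (fun ω => P ω * (f ω * Y1 ω)) Pr :=
      hintfy.mono (hP.mul hW1meas).aestronglyMeasurable (Filter.Eventually.of_forall hbound)
    have hφ : Measurable (fun z : (Fin m → ℝ) × ℝ × ℝ =>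
        (Fin.cons 1 z.1 : Fin (m+1) → ℝ) j * z.2.1) :=
      ((measurable_pi_apply j).comp (my_meas_cons.comp measurable_fst)).mul
        (measurable_fst.comp measurable_snd)
    have hindW1 : IndepFun P (fun ω => f ω * Y1 ω) Pr := hindep.comp measurable_id hφ
    -- integrability of f * Y1
    have hW1int : Integrable (fun ω => f ω * Y1 ω) Pr := by
      have hv : Measurable fun ω => (‖f ω * Y1 ω‖₊ : ENNReal) :=
        hW1meas.nnnorm.coe_nnreal_ennreal
      have hu : Measurable fun ω => ENNReal.ofReal (P ω) :=
        ENNReal.measurable_ofReal.comp hP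
      have hiuv : IndepFun (fun ω => ENNReal.ofReal (P ω))
          (fun ω => (‖f ω * Y1 ω‖₊ : ENNReal)) Pr :=
        hindW1.comp ENNReal.measurable_ofReal
          (measurable_coe_nnreal_ennreal.comp measurable_nnnorm)
      have hprod := lintegral_mul_eq_lintegral_mul_lintegral_of_indepFun hu hv hiuv
      have hPl : ∫⁻ ω, ENNReal.ofReal (P ω) ∂Pr = ENNReal.ofReal p := by
        have h1 : (fun ω => ENNReal.ofReal (P ω))
            = Set.indicator {ω | P ω = 1} (1 : Ω → ENNReal) := by
          funext ω
          rcases hPvals ω with h | h <;> simp [Set.indicator, h]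
        rw [h1, lintegral_indicator_one hPset, hPp]
      have heq : ∀ ω, ENNReal.ofReal (P ω) * (‖f ω * Y1 ω‖₊ : ENNReal)
          = (‖P ω * (f ω * Y1 ω)‖₊ : ENNReal) := by
        intro ω
        have hPnn : 0 ≤ P ω := by rcases hPvals ω with h | h <;> simp [h]
        rw [← Real.enorm_eq_ofReal hPnn, ← enorm_eq_nnnorm, ← enorm_eq_nnnorm, ← enorm_mul]
      have hfin : (∫⁻ ω, ENNReal.ofReal (P ω) ∂Pr) *
          (∫⁻ ω, (‖f ω * Y1 ω‖₊ : ENNReal) ∂Pr) < ⊤ := by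
        rw [← hprod]
        simp only [Pi.mul_apply, heq]
        exact hPW1int.2
      rw [hPl] at hfin
      have hpne : ENNReal.ofReal p ≠ 0 := by
        simp [ENNReal.ofReal_eq_zero, not_le, hp0]
      refine ⟨hW1meas.aestronglyMeasurable, ?_⟩
      by_contra htop
      rw [HasFiniteIntegral, not_lt, top_le_iff] at htop
      simp only [enorm_eq_nnnorm] at htop
      rw [htop, ENNReal.mul_top hpne] at hfin
      exact (lt_irrefl _ hfin)
    -- integral computations
    have hEPW1 : ∫ ω, P ω * (f ω * Y1 ω) ∂Pr = p * ∫ ω, f ω * Y1 ω ∂Pr := by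
      have := hindW1.integral_mul_eq_mul_integral hP.aestronglyMeasurable hW1meas.aestronglyMeasurable
      simpa [hEP] using this
    have hψ : Measurable (fun z : (Fin m → ℝ) × ℝ × ℝ =>
        (Fin.cons 1 z.1 : Fin (m+1) → ℝ) j * z.2.2) :=
      ((measurable_pi_apply j).comp (my_meas_cons.comp measurable_fst)).mul
        (measurable_snd.comp measurable_snd)
    have hindW2 : IndepFun (fun ω => 1 - P ω) (fun ω => f ω * Y2 ω) Pr :=
      hindep.comp (measurable_const.sub measurable_id) hψ
    have hEQW2 : ∫ ω, (1 - P ω) * (f ω * Y2 ω) ∂Pr = (1 - p) * ∫ ω, f ω * Y2 ω ∂Pr := by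
      have := hindW2.integral_mul_eq_mul_integral (measurable_const.sub hP).aestronglyMeasurable
        hW2meas.aestronglyMeasurable
      simpa [hE1P] using this
    have hQW2int : Integrable (fun ω => (1 - P ω) * (f ω * Y2 ω)) Pr := by
      have h1 : (fun ω => (1 - P ω) * (f ω * Y2 ω))
          = fun ω => f ω * Y ω - P ω * (f ω * Y1 ω) := by
        funext ω; rw [hY]; ring
      rw [h1]
      exact hintfy.sub hPW1int
    have hsplit : ∫ ω, f ω * Y ω ∂Pr
        = ∫ ω, P ω * (f ω * Y1 ω) ∂Pr + ∫ ω, (1 - P ω) * (f ω * Y2 ω) ∂Pr := by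
      rw [← integral_add hPW1int hQW2int]
      apply integral_congr_ae
      filter_upwards with ω
      rw [hY]; ring
    -- conditional expectation step
    have hEW1 : ∫ ω, f ω * Y1 ω ∂Pr
        = μ1 * ∫ ω, f ω ∂Pr + ∑ k, β k * ∫ ω, f ω * X ω k ∂Pr := by
      have hm' : MeasurableSpace.comap X inferInstance ≤ _ := hX.comap_le
      haveI : SigmaFinite (Pr.trim hm') := by infer_instance
      have hXm' : Measurable[MeasurableSpace.comap X inferInstance] X :=
        fun s hs => ⟨s, hs, rfl⟩
      have hfsm : StronglyMeasurable[MeasurableSpace.comap X inferInstance] f :=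
        (((measurable_pi_apply j).comp my_meas_cons).comp hXm').stronglyMeasurable
      have hmul := condExp_mul_of_stronglyMeasurable_left hfsm
        (by exact hW1int) hY1int
      have hint2 : ∀ k, Integrable (fun ω => β k * (f ω * X ω k)) Pr :=
        fun k => (my_int_mul (hXe2 j) (hXk2 k)).const_mul (β k)
      calc ∫ ω, f ω * Y1 ω ∂Pr
          = ∫ ω, (Pr[f * Y1 | MeasurableSpace.comap X inferInstance]) ω ∂Pr :=
            (integral_condExp hm').symm
        _ = ∫ ω, (f * Pr[Y1 | MeasurableSpace.comap X inferInstance]) ω ∂Pr :=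
            integral_congr_ae hmul
        _ = ∫ ω, (μ1 * f ω + ∑ k, β k * (f ω * X ω k)) ∂Pr := by
            apply integral_congr_ae
            filter_upwards [hcondY1] with ω hω
            simp only [Pi.mul_apply, hω, dotProduct, mul_add, Finset.mul_sum]
            congr 1
            · ring
            · exact Finset.sum_congr rfl fun k _ => by ring
        _ = μ1 * ∫ ω, f ω ∂Pr + ∑ k, β k * ∫ ω, f ω * X ω k ∂Pr := by
            rw [integral_add ((hXeint j).const_mul μ1) (integrable_finset_sum _ fun k _ => hint2 k),
              integral_const_mul, integral_finset_sum _ fun k _ => hint2 k]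
            congr 1
            apply Finset.sum_congr rfl
            intro k _
            rw [integral_const_mul]
    have hEW2 : ∫ ω, f ω * Y2 ω ∂Pr = μ2 * ∫ ω, f ω ∂Pr := by
      have hi : IndepFun f Y2 Pr :=
        (hY2X.comp measurable_id ((measurable_pi_apply j).comp my_meas_cons)).symm
      have := hi.integral_mul_eq_mul_integral hfmeas.aestronglyMeasurable hY2.aestronglyMeasurable
      simp only [Pi.mul_apply] at this
      rw [this, hmeanY2]
      ring
    -- right-hand side
    have hrhs : M.mulVec lv j
        = (p*μ1 + (1-p)*μ2) * ∫ ω, f ω ∂Pr + p * ∑ k, β k * ∫ ω, f ω * X ω k ∂Pr := by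
      rw [Matrix.mulVec, dotProduct, Fin.sum_univ_succ]
      simp only [hM, hlv, Matrix.of_apply, Fin.cons_zero, Fin.cons_succ, Pi.smul_apply,
        smul_eq_mul]
      have h0 : (∫ ω, Xe ω j * Xe ω 0 ∂Pr) = ∫ ω, f ω ∂Pr := by
        apply integral_congr_ae
        filter_upwards with ω
        simp [hXe, hf]
      have hsucc : ∀ k : Fin m, (∫ ω, Xe ω j * Xe ω k.succ ∂Pr) = ∫ ω, f ω * X ω k ∂Pr := by
        intro k
        apply integral_congr_ae
        filter_upwards with ω
        simp [hXe, hf]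
      rw [h0, Finset.mul_sum]
      rw [show ∑ k : Fin m, (∫ ω, Xe ω j * Xe ω k.succ ∂Pr) * (p * β k)
          = ∑ k : Fin m, p * (β k * ∫ ω, f ω * X ω k ∂Pr) by
        apply Finset.sum_congr rfl; intro k _; rw [hsucc k]; ring]
      ring
    have hlhs : b j = ∫ ω, f ω * Y ω ∂Pr := rfl
    rw [hlhs, hsplit, hEPW1, hEQW2, hEW1, hEW2, hrhs]
    ring
  -- Part II : the strong law of large numbers
  have key : ∀ (g : (Fin m → ℝ) × ℝ → ℝ), Measurable g →
      Integrable (fun ω => g (X ω, Y ω)) Pr →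
      ∀ᵐ ω ∂Pr, Tendsto (fun n : ℕ => (n : ℝ)⁻¹ • ∑ i ∈ Finset.range n, g (Z i ω)) atTop
        (𝓝 (∫ ω, g (X ω, Y ω) ∂Pr)) := by
    intro g hg hgint
    have hid : ∀ i, IdentDistrib (fun ω => g (Z i ω)) (fun ω => g (X ω, Y ω)) Pr Pr :=
      fun i => (hident i).comp hg
    have h0 : Integrable (fun ω => g (Z 0 ω)) Pr := (hid 0).integrable_iff.mpr hgint
    have hind : Pairwise (Function.onFun (IndepFun · · Pr) fun i ω => g (Z i ω)) :=
      fun i j hij => (hiid.indepFun hij).comp hg hg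
    have hidd : ∀ i, IdentDistrib (fun ω => g (Z i ω)) (fun ω => g (Z 0 ω)) Pr Pr :=
      fun i => (hid i).trans (hid 0).symm
    have hs := strong_law_ae (μ := Pr) (fun i ω => g (Z i ω)) h0 hind hidd
    rw [(hid 0).integral_eq] at hs
    exact hs
  have hGconv : ∀ᵐ ω ∂Pr, ∀ (j k : Fin (m+1)),
      Tendsto (fun n : ℕ => (n:ℝ)⁻¹ • ∑ i ∈ Finset.range n, Xt i ω j * Xt i ω k) atTop
        (𝓝 (M j k)) := by
    rw [ae_all_iff]
    intro j
    rw [ae_all_iff]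
    intro k
    have hg : Measurable (fun z : (Fin m → ℝ) × ℝ =>
        (Fin.cons 1 z.1 : Fin (m+1) → ℝ) j * (Fin.cons 1 z.1 : Fin (m+1) → ℝ) k) :=
      ((measurable_pi_apply j).comp (my_meas_cons.comp measurable_fst)).mul
        ((measurable_pi_apply k).comp (my_meas_cons.comp measurable_fst))
    have := key _ hg (hprod_int j k)
    filter_upwards [this] with ω h
    have heq : ∀ n : ℕ, (∑ i ∈ Finset.range n, Xt i ω j * Xt i ω k)
        = ∑ i ∈ Finset.range n, (Fin.cons 1 ((Z i ω).1) : Fin (m+1) → ℝ) j *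
          (Fin.cons 1 ((Z i ω).1) : Fin (m+1) → ℝ) k := by
      intro n
      apply Finset.sum_congr rfl
      intro i _
      rw [hXt]
    simp only [heq]
    exact h
  have hSconv : ∀ᵐ ω ∂Pr, ∀ (j : Fin (m+1)),
      Tendsto (fun n : ℕ => (n:ℝ)⁻¹ • ∑ i ∈ Finset.range n, Xt i ω j * (Z i ω).2) atTop
        (𝓝 (b j)) := by
    rw [ae_all_iff]
    intro j
    have hg : Measurable (fun z : (Fin m → ℝ) × ℝ =>
        (Fin.cons 1 z.1 : Fin (m+1) → ℝ) j * z.2) :=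
      ((measurable_pi_apply j).comp (my_meas_cons.comp measurable_fst)).mul measurable_snd
    have := key _ hg (hXtY j)
    filter_upwards [this] with ω h
    have heq : ∀ n : ℕ, (∑ i ∈ Finset.range n, Xt i ω j * (Z i ω).2)
        = ∑ i ∈ Finset.range n, (Fin.cons 1 ((Z i ω).1) : Fin (m+1) → ℝ) j * (Z i ω).2 := by
      intro n
      apply Finset.sum_congr rfl
      intro i _
      rw [hXt]
    simp only [heq]
    exact h
  -- Part III : conclude
  filter_upwards [hGconv, hSconv] with ω hGc hSc
  set S : ℕ → Fin (m+1) → ℝ :=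
    fun n => ∑ i ∈ Finset.range n, fun j => Xt i ω j * (Z i ω).2 with hS
  have hGmat : Tendsto (fun n : ℕ => (n:ℝ)⁻¹ • G n ω) atTop (𝓝 M) := by
    apply tendsto_pi_nhds.mpr
    intro j
    rw [tendsto_pi_nhds]
    intro k
    refine Tendsto.congr (fun n => ?_) (hGc j k)
    rw [hG n ω]
    simp [Matrix.sum_apply, Finset.mul_sum]
  have hSvec : Tendsto (fun n : ℕ => (n:ℝ)⁻¹ • S n) atTop (𝓝 b) := by
    rw [tendsto_pi_nhds]
    intro j
    refine Tendsto.congr (fun n => ?_) (hSc j)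
    rw [hS]
    simp [Finset.sum_apply, Finset.mul_sum]
  have hdet : M.det ≠ 0 := by
    intro h
    rw [h] at hMinv'
    exact (by simpa using hMinv' : False)
  have hcinv : ContinuousAt Inv.inv M :=
    continuousAt_matrix_inv M (by rw [Ring.inverse_eq_inv']; exact continuousAt_inv₀ hdet)
  have hinvt : Tendsto (fun n : ℕ => ((n:ℝ)⁻¹ • G n ω)⁻¹) atTop (𝓝 M⁻¹) :=
    hcinv.tendsto.comp hGmat
  have hcont : Continuous (fun q : Matrix (Fin (m+1)) (Fin (m+1)) ℝ × (Fin (m+1) → ℝ) =>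
      A.mulVec (q.1.mulVec q.2)) :=
    Continuous.matrix_mulVec continuous_const (continuous_fst.matrix_mulVec continuous_snd)
  have htest := (hcont.tendsto (M⁻¹, b)).comp (hinvt.prodMk_nhds hSvec)
  have hmv : Tendsto (fun n : ℕ =>
      A.mulVec ((((n:ℝ)⁻¹ • G n ω)⁻¹).mulVec ((n:ℝ)⁻¹ • S n))) atTop
      (𝓝 (A.mulVec (M⁻¹.mulVec b))) := htest
  have hlim : A.mulVec (M⁻¹.mulVec b) = p • β := by
    rw [hbj, Matrix.mulVec_mulVec, Matrix.mulVec_mulVec, Matrix.mul_assoc,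
      Matrix.nonsing_inv_mul M hMinv', Matrix.mul_one]
    funext i
    rw [Matrix.mulVec, dotProduct, hA]
    simp only [Matrix.of_apply, ite_mul, one_mul, zero_mul]
    rw [Finset.sum_ite_eq' Finset.univ i.succ lv]
    simp [hlv]
  have hev : (fun n : ℕ =>
      A.mulVec ((((n:ℝ)⁻¹ • G n ω)⁻¹).mulVec ((n:ℝ)⁻¹ • S n)))
      =ᶠ[atTop] fun n => lamhat n ω := by
    filter_upwards [eventually_ge_atTop 1] with n hn
    have hn0 : (n:ℝ) ≠ 0 := Nat.cast_ne_zero.mpr (by omega)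
    rw [hlamhat n ω]
    rw [my_smul_inv _ (inv_ne_zero hn0) (G n ω), inv_inv]
    have hvv : ((n : ℝ) • (G n ω)⁻¹) *ᵥ ((n : ℝ)⁻¹ • S n) = (G n ω)⁻¹ *ᵥ S n := by
      rw [Matrix.smul_mulVec, Matrix.mulVec_smul, smul_smul,
        mul_inv_cancel₀ hn0, one_smul]
    rw [hvv]
  rw [hlim] at hmv
  exact hmv.congr' hev
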